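/- The maps I ↦ →_I and → ↦ I_→ are inverse order-isomorphisms between the poset of G-indexing systems (ordered by levelwise inclusion) and the poset of G-transfer systems (ordered by refinement). -/

import Mathlib

open Pointwise

/-- Conjugate of a subgroup: `conjS g H = g H g⁻¹`. -/
def conjS {G : Type} [Group G] (g : G) (H : Subgroup G) : Subgroup G :=
  MulAut.conj g • H

/-- The trivial action of a group on a type. -/
def trivialSMul (H : Type) [Group H] (X : Type) : MulAction H X where
  smul := fun _ x => x
  one_smul := fun _ => rfl
  mul_smul := fun _ _ _ => rfl

/-- Application of an explicitly given action. -/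
def actSMul {H X : Type} [Group H] (a : MulAction H X) (h : H) (x : X) : X :=
  letI := a; h • x

/-- Restriction of an action along a group homomorphism. -/
def resAction {K H : Type} [Group K] [Group H] (φ : K →* H) (X : Type)
    (a : MulAction H X) : MulAction K X :=
  letI := a; MulAction.compHom X φ

/-- The disjoint union of two actions. -/
def sumAction {H X Y : Type} [Group H] (aX : MulAction H X) (aY : MulAction H Y) :
    MulAction H (X ⊕ Y) :=
  letI := aX; letI := aY
  { smul := fun h p => Sum.map (fun x => h • x) (fun y => h • y) p
    one_smul := by rintro (x | y) <;> simp
    mul_smul := by rintro h h' (x | y) <;> simp [mul_smul] }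

/-- A map is equivariant for two explicitly given actions. -/
def IsEquivariant {H X Y : Type} [Group H] (aX : MulAction H X)
    (aY : MulAction H Y) (f : X → Y) : Prop :=
  ∀ (h : H) (x : X), f (actSMul aX h x) = actSMul aY h (f x)

/-- The setoid on `H × X` whose quotient is the induced `H`-set
`ind_K^H X = H ×_K X` of a `K`-set `X` along `K ≤ H`. -/
def indSetoid (H : Type) [Group H] (K : Subgroup H) (X : Type)
    (a : MulAction K X) : Setoid (H × X) :=
  letI := a
  { r := fun p q => ∃ k : K, p.1 * k = q.1 ∧ k • q.2 = p.2
    iseqv := by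
      constructor
      · exact fun p => ⟨1, by simp, by simp⟩
      · rintro p q ⟨k, hk1, hk2⟩
        refine ⟨k⁻¹, ?_, ?_⟩
        · rw [← hk1]; simp [mul_assoc]
        · rw [← hk2]; simp
      · rintro p q r ⟨k, hk1, hk2⟩ ⟨l, hl1, hl2⟩
        refine ⟨k * l, ?_, ?_⟩
        · rw [← hl1, ← hk1]; simp [mul_assoc]
        · rw [← hk2, ← hl2]; simp [mul_smul] }

/-- The underlying set of the induced `H`-set `ind_K^H X`. -/
def IndType (H : Type) [Group H] (K : Subgroup H) (X : Type)
    (a : MulAction K X) : Type :=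
  Quotient (indSetoid H K X a)

instance (H : Type) [Group H] [Finite H] (K : Subgroup H) (X : Type)
    [Finite X] (a : MulAction K X) : Finite (IndType H K X a) :=
  Quotient.finite _

/-- The `H`-action on the induced `H`-set `ind_K^H X`. -/
def indAction (H : Type) [Group H] (K : Subgroup H) (X : Type)
    (a : MulAction K X) : MulAction H (IndType H K X a) where
  smul h := Quotient.map (fun p => (h * p.1, p.2))
    (by rintro p q ⟨k, hk1, hk2⟩; exact ⟨k, by rw [mul_assoc, hk1], hk2⟩)
  one_smul t := Quotient.inductionOn t fun p => by
    show Quotient.map _ _ ⟦p⟧ = ⟦p⟧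
    simp
  mul_smul g h t := Quotient.inductionOn t fun p => by
    show Quotient.map _ _ ⟦p⟧ = Quotient.map _ _ (Quotient.map _ _ ⟦p⟧)
    simp [mul_assoc]

/-- A `G`-indexing system: for each subgroup `H ≤ G` a class of finite `H`-sets
containing all trivial sets and closed under isomorphism, restriction,
conjugation, subobjects, finite coproducts, and self-induction. -/
structure IndexingSystem (G : Type) [Group G] [Finite G] where
  mem : ∀ (H : Subgroup G) (X : Type), Finite X → MulAction H X → Prop
  mem_trivial : ∀ (H : Subgroup G) (X : Type) (fX : Finite X),
    mem H X fX (trivialSMul H X)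
  mem_iso : ∀ (H : Subgroup G) (X Y : Type) (fX : Finite X) (fY : Finite Y)
    (aX : MulAction H X) (aY : MulAction H Y) (e : X ≃ Y),
    IsEquivariant aX aY e → mem H X fX aX → mem H Y fY aY
  mem_res : ∀ (K H : Subgroup G) (hKH : K ≤ H) (X : Type) (fX : Finite X)
    (aX : MulAction H X), mem H X fX aX →
    mem K X fX (resAction (Subgroup.inclusion hKH) X aX)
  mem_conj : ∀ (H : Subgroup G) (g : G) (X : Type) (fX : Finite X)
    (aX : MulAction H X), mem H X fX aX →
    mem (conjS g H) X fX
      (resAction ((Subgroup.equivSMul (MulAut.conj g) H).symm.toMonoidHom) X aX)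
  mem_sub : ∀ (H : Subgroup G) (X Y : Type) (fX : Finite X) (fY : Finite Y)
    (aX : MulAction H X) (aY : MulAction H Y) (f : X → Y),
    Function.Injective f → IsEquivariant aX aY f →
    mem H Y fY aY → mem H X fX aX
  mem_sum : ∀ (H : Subgroup G) (X Y : Type) (fX : Finite X) (fY : Finite Y)
    (aX : MulAction H X) (aY : MulAction H Y),
    mem H X fX aX → mem H Y fY aY →
    mem H (X ⊕ Y) inferInstance (sumAction aX aY)
  mem_selfind : ∀ (K H : Subgroup G) (hKH : K ≤ H) (X : Type) (fX : Finite X)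
    (aX : MulAction K X),
    mem K X fX aX →
    mem H (H ⧸ K.subgroupOf H) inferInstance inferInstance →
    mem H (IndType H (K.subgroupOf H) X
        (resAction (Subgroup.subgroupOfEquivOfLe hKH).toMonoidHom X aX))
      inferInstance
      (indAction H (K.subgroupOf H) X
        (resAction (Subgroup.subgroupOfEquivOfLe hKH).toMonoidHom X aX))

/-- The graph of an indexing system: `K →_I H` iff `K ≤ H` and the orbit
`H/K` is admissible for `I`. -/
def IndexingSystem.grel {G : Type} [Group G] [Finite G] (I : IndexingSystem G)
    (K H : Subgroup G) : Prop :=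
  K ≤ H ∧ I.mem H (H ⧸ K.subgroupOf H) inferInstance inferInstance

/-- A `G`-transfer system: a partial order on the subgroups of `G` refining
inclusion, closed under conjugation and restriction. -/
structure TransferSystem (G : Type) [Group G] where
  rel : Subgroup G → Subgroup G → Prop
  le_of_rel : ∀ K H : Subgroup G, rel K H → K ≤ H
  refl : ∀ H : Subgroup G, rel H H
  antisymm : ∀ K H : Subgroup G, rel K H → rel H K → K = H
  trans : ∀ J K H : Subgroup G, rel J K → rel K H → rel J H
  conj : ∀ (K H : Subgroup G) (g : G), rel K H → rel (conjS g K) (conjS g H)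
  res : ∀ K H L : Subgroup G, rel K H → L ≤ H → rel (K ⊓ L) L

/-- The componentwise action on a disjoint union (sigma type) of actions. -/
def sigmaAction {H : Type} [Group H] {ι : Type} {f : ι → Type}
    (a : ∀ i, MulAction H (f i)) : MulAction H (Σ i, f i) where
  smul h p := ⟨p.1, actSMul (a p.1) h p.2⟩
  one_smul := by
    rintro ⟨i, x⟩
    show (⟨i, actSMul (a i) 1 x⟩ : Σ i, f i) = ⟨i, x⟩
    first
    | exact congrArg (Sigma.mk i) ((a i).one_smul x)
    | simp [actSMul]
  mul_smul := by
    rintro g h ⟨i, x⟩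
    show (⟨i, actSMul (a i) (g * h) x⟩ : Σ i, f i) = ⟨i, actSMul (a i) g (actSMul (a i) h x)⟩
    first
    | exact congrArg (Sigma.mk i) ((a i).mul_smul g h x)
    | simp [actSMul, mul_smul]

/-- `OrbitCoprod T H X aX` says that the finite `H`-set `X` is isomorphic to a
finite disjoint union of orbits `H/K` with `K → H` in the transfer system
`T`. -/
def OrbitCoprod {G : Type} [Group G] [Finite G] (T : TransferSystem G)
    (H : Subgroup G) (X : Type) (aX : MulAction H X) : Prop :=
  ∃ (n : ℕ) (K : Fin n → Subgroup G), (∀ i, T.rel (K i) H) ∧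
    ∃ e : X ≃ Σ i : Fin n, (H ⧸ (K i).subgroupOf H),
      IsEquivariant aX (sigmaAction fun _ => inferInstance) e

/-- Transfer systems are ordered by refinement. -/
instance {G : Type} [Group G] : PartialOrder (TransferSystem G) where
  le T₁ T₂ := ∀ K H : Subgroup G, T₁.rel K H → T₂.rel K H
  le_refl := fun _ _ _ h => h
  le_trans := fun _ _ _ hab hbc K H h => hbc K H (hab K H h)
  le_antisymm := fun a b h1 h2 => by
    have hrel : a.rel = b.rel := by
      funext K H; exact propext ⟨h1 K H, h2 K H⟩
    cases a; cases b; cases hrel; rfl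

/-- Indexing systems are ordered by levelwise inclusion. -/
instance {G : Type} [Group G] [Finite G] : PartialOrder (IndexingSystem G) where
  le I J := ∀ (H : Subgroup G) (X : Type) (fX : Finite X) (aX : MulAction H X),
    I.mem H X fX aX → J.mem H X fX aX
  le_refl := fun _ _ _ _ _ h => h
  le_trans := fun _ _ _ hab hbc H X fX aX h => hbc H X fX aX (hab H X fX aX h)
  le_antisymm := fun a b h1 h2 => by
    have hmem : a.mem = b.mem := by
      funext H X fX aX; exact propext ⟨h1 H X fX aX, h2 H X fX aX⟩
    cases a; cases b; cases hmem; rfl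

/-!
Both maps are read through stabilizers. If `X` is an admissible `H`-set of an indexing system `I`,
each orbit `H/Stab(x)` embeds equivariantly into `X`, so `Stab(x) →_I H`; conversely `X` is the
disjoint union of its orbits, so it is admissible once all of them are. Hence `I` is recovered
from its graph. Dually, a finite `H`-set is a coproduct of orbits `H/K` with `K → H` exactly when
every stabilizer is related to `H`, the stabilizers of `H/K` being the conjugates `hKh⁻¹`. Each
axiom of either structure thereby reduces to computing stabilizers of restricted, conjugated,
summed and induced sets; transitivity of `→_I`, for instance, comes from the point `[1, J]` of
`H ×_K K/J`, whose stabilizer is `J`.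
-/

section Actions

variable {H X Y : Type} [Group H]

lemma actSMul_one (a : MulAction H X) (x : X) : actSMul a 1 x = x := a.one_smul x

lemma actSMul_mul (a : MulAction H X) (g h : H) (x : X) :
    actSMul a (g * h) x = actSMul a g (actSMul a h x) := a.mul_smul g h x

lemma actSMul_inv_actSMul (a : MulAction H X) (h : H) (x : X) :
    actSMul a h⁻¹ (actSMul a h x) = x := by
  rw [← actSMul_mul, inv_mul_cancel, actSMul_one]

lemma actSMul_inv_of_actSMul_eq (a : MulAction H X) {h : H} {x : X}
    (e : actSMul a h x = x) : actSMul a h⁻¹ x = x := by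
  conv_lhs => rw [← e]
  exact actSMul_inv_actSMul a h x

lemma IsEquivariant.equiv_symm {aX : MulAction H X} {aY : MulAction H Y} {e : X ≃ Y}
    (he : IsEquivariant aX aY e) : IsEquivariant aY aX e.symm := by
  intro h y
  apply e.injective
  rw [he, e.apply_symm_apply, e.apply_symm_apply]

lemma indType_mk_eq_actSMul_mk_one {K : Subgroup H} (aX : MulAction K X) (h : H) (x : X) :
    Quotient.mk (indSetoid H K X aX) (h, x)
      = actSMul (indAction H K X aX) h (Quotient.mk _ (1, x)) := by
  show _ = Quotient.mk _ (h * 1, x)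
  rw [mul_one]

lemma quotient_mk_eq_actSMul_mk_one (S : Subgroup H) (h : H) :
    (h : H ⧸ S) = actSMul inferInstance h ((1 : H) : H ⧸ S) := by
  show _ = ((h * 1 : H) : H ⧸ S)
  rw [mul_one]

end Actions

section Stabilizers

variable {G : Type} [Group G]

lemma mem_conjS {g x : G} {H : Subgroup G} : x ∈ conjS g H ↔ ∃ h ∈ H, g * h * g⁻¹ = x := by
  rw [conjS, Subgroup.mem_smul_pointwise_iff_exists]
  simp [MulAut.conj_apply]

/-- The stabilizer of `x`, taken as a subgroup of `G` rather than of `H`, so that stabilizers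
for different subgroups can be compared in a transfer system. -/
def stabG (H : Subgroup G) {X : Type} (a : MulAction H X) (x : X) : Subgroup G where
  carrier := {g | ∃ hg : g ∈ H, actSMul a ⟨g, hg⟩ x = x}
  one_mem' := ⟨H.one_mem, actSMul_one a x⟩
  mul_mem' := by
    rintro p q ⟨hp, ep⟩ ⟨hq, eq⟩
    exact ⟨H.mul_mem hp hq, (actSMul_mul a ⟨p, hp⟩ ⟨q, hq⟩ x).trans (by rw [eq, ep])⟩
  inv_mem' := by
    rintro p ⟨hp, ep⟩
    exact ⟨H.inv_mem hp, actSMul_inv_of_actSMul_eq a ep⟩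

variable {H : Subgroup G} {X Y : Type}

lemma mem_stabG {a : MulAction H X} {x : X} {g : G} :
    g ∈ stabG H a x ↔ ∃ hg : g ∈ H, actSMul a ⟨g, hg⟩ x = x := Iff.rfl

lemma coe_mem_stabG {a : MulAction H X} {x : X} (h : H) :
    (h : G) ∈ stabG H a x ↔ actSMul a h x = x :=
  ⟨fun ⟨_, e⟩ => e, fun e => ⟨h.2, e⟩⟩

lemma stabG_le {a : MulAction H X} {x : X} : stabG H a x ≤ H := fun _ hg => hg.1

lemma stabG_eq_of_injective {aX : MulAction H X} {aY : MulAction H Y} {f : X → Y}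
    (hf : Function.Injective f) (he : IsEquivariant aX aY f) (x : X) :
    stabG H aX x = stabG H aY (f x) := by
  ext g
  exact exists_congr fun _ => by rw [← he, hf.eq_iff]

lemma stabG_sum_inl (aX : MulAction H X) (aY : MulAction H Y) (x : X) :
    stabG H (sumAction aX aY) (.inl x) = stabG H aX x :=
  (stabG_eq_of_injective Sum.inl_injective (fun _ _ => rfl) x).symm

lemma stabG_sum_inr (aX : MulAction H X) (aY : MulAction H Y) (y : Y) :
    stabG H (sumAction aX aY) (.inr y) = stabG H aY y :=
  (stabG_eq_of_injective Sum.inr_injective (fun _ _ => rfl) y).symm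

lemma stabG_sigma_mk {ι : Type} {f : ι → Type} (a : ∀ i, MulAction H (f i)) (i : ι) (q : f i) :
    stabG H (sigmaAction a) ⟨i, q⟩ = stabG H (a i) q :=
  (stabG_eq_of_injective sigma_mk_injective (fun _ _ => rfl) q).symm

lemma stabG_actSMul (a : MulAction H X) (h : H) (x : X) :
    stabG H a (actSMul a h x) = conjS (h : G) (stabG H a x) := by
  ext g
  rw [mem_conjS]
  constructor
  · rintro ⟨hg, e⟩
    refine ⟨((h⁻¹ * ⟨g, hg⟩ * h : H) : G), (coe_mem_stabG _).2 ?_, by simp [mul_assoc]⟩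
    rw [actSMul_mul, actSMul_mul, e, actSMul_inv_actSMul]
  · rintro ⟨s, ⟨hs, es⟩, rfl⟩
    refine (coe_mem_stabG (h * ⟨s, hs⟩ * h⁻¹)).2 ?_
    rw [actSMul_mul, actSMul_inv_actSMul, actSMul_mul, es]

lemma stabG_trivial (x : X) : stabG H (trivialSMul H X) x = H :=
  le_antisymm stabG_le fun _ hg => ⟨hg, rfl⟩

lemma stabG_quotient_one {K : Subgroup G} (hKH : K ≤ H) :
    stabG H inferInstance ((1 : H) : H ⧸ K.subgroupOf H) = K := by
  ext g
  constructor
  · rintro ⟨hg, e⟩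
    have e' : ((⟨g, hg⟩ * 1 : H) : H ⧸ K.subgroupOf H) = ((1 : H) : H ⧸ K.subgroupOf H) := e
    rw [QuotientGroup.eq, Subgroup.mem_subgroupOf] at e'
    simpa using e'
  · intro hg
    refine ⟨hKH hg, ?_⟩
    show ((⟨g, hKH hg⟩ * 1 : H) : H ⧸ K.subgroupOf H) = ((1 : H) : H ⧸ K.subgroupOf H)
    rw [QuotientGroup.eq, Subgroup.mem_subgroupOf]
    simpa using hg

lemma stabG_res {K : Subgroup G} (hKH : K ≤ H) (aX : MulAction H X) (x : X) :
    stabG K (resAction (Subgroup.inclusion hKH) X aX) x = stabG H aX x ⊓ K := by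
  ext g
  exact ⟨fun ⟨hg, e⟩ => ⟨⟨hKH hg, e⟩, hg⟩, fun ⟨⟨_, e⟩, hg⟩ => ⟨hg, e⟩⟩

lemma stabG_conj (g : G) (aX : MulAction H X) (x : X) :
    stabG (conjS g H)
      (resAction ((Subgroup.equivSMul (MulAut.conj g) H).symm.toMonoidHom) X aX) x
      = conjS g (stabG H aX x) := by
  set φ : H ≃* conjS g H := Subgroup.equivSMul (MulAut.conj g) H
  ext c
  rw [mem_conjS]
  constructor
  · rintro ⟨hc, e⟩
    exact ⟨_, (coe_mem_stabG (φ.symm ⟨c, hc⟩)).2 e,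
      congrArg Subtype.val (φ.apply_symm_apply ⟨c, hc⟩)⟩
  · rintro ⟨s, ⟨hs, es⟩, rfl⟩
    have hφs : φ.symm ⟨g * s * g⁻¹, mem_conjS.2 ⟨s, hs, rfl⟩⟩ = ⟨s, hs⟩ :=
      φ.symm_apply_eq.2 rfl
    exact ⟨mem_conjS.2 ⟨s, hs, rfl⟩, (congrArg (actSMul aX · x) hφs).trans es⟩

lemma stabG_indAction_mk_one {K : Subgroup G} (hKH : K ≤ H) (aX : MulAction K X) (x : X) :
    stabG H (indAction H (K.subgroupOf H) X
        (resAction (Subgroup.subgroupOfEquivOfLe hKH).toMonoidHom X aX))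
      (Quotient.mk _ (1, x)) = stabG K aX x := by
  ext g
  constructor
  · rintro ⟨hg, e⟩
    obtain ⟨k, hk, hkx⟩ := Quotient.exact e
    have hgk : g = (((k : H) : G))⁻¹ :=
      eq_inv_of_mul_eq_one_left (by simpa using congrArg Subtype.val hk)
    exact hgk ▸ (stabG K aX x).inv_mem
      ((coe_mem_stabG (Subgroup.subgroupOfEquivOfLe hKH k)).2 hkx)
  · rintro ⟨hgK, e⟩
    refine ⟨hKH hgK, Quotient.sound ⟨⟨⟨g⁻¹, H.inv_mem (hKH hgK)⟩, K.inv_mem hgK⟩, ?_, ?_⟩⟩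
    · exact Subtype.ext (by simp)
    · exact actSMul_inv_of_actSMul_eq aX e

end Stabilizers

section OrbitMap

variable {G : Type} [Group G] (H : Subgroup G) {X : Type} (a : MulAction H X) (x : X)

def orbitMap (q : H ⧸ (stabG H a x).subgroupOf H) : X :=
  q.liftOn' (fun h => actSMul a h x) fun h₁ h₂ hh => by
    have e : actSMul a (h₁⁻¹ * h₂) x = x :=
      (coe_mem_stabG _).1 (Subgroup.mem_subgroupOf.1 (QuotientGroup.leftRel_apply.mp hh))
    calc actSMul a h₁ x = actSMul a h₁ (actSMul a (h₁⁻¹ * h₂) x) := by rw [e]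
      _ = actSMul a h₂ x := by rw [← actSMul_mul, mul_inv_cancel_left]

lemma orbitMap_mk (h : H) : orbitMap H a x h = actSMul a h x := rfl

lemma orbitMap_injective : Function.Injective (orbitMap H a x) := by
  intro q₁ q₂ hq
  obtain ⟨h₁, rfl⟩ := QuotientGroup.mk_surjective q₁
  obtain ⟨h₂, rfl⟩ := QuotientGroup.mk_surjective q₂
  rw [orbitMap_mk, orbitMap_mk] at hq
  rw [QuotientGroup.eq, Subgroup.mem_subgroupOf, coe_mem_stabG, actSMul_mul, ← hq,
    actSMul_inv_actSMul]

lemma isEquivariant_orbitMap : IsEquivariant inferInstance a (orbitMap H a x) := by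
  intro h q
  obtain ⟨h', rfl⟩ := QuotientGroup.mk_surjective q
  exact actSMul_mul a h h' x

lemma exists_equiv_sigma_quotient_stabG [Finite X] :
    ∃ (n : ℕ) (x : Fin n → X) (e : X ≃ Σ i : Fin n, H ⧸ (stabG H a (x i)).subgroupOf H),
      IsEquivariant a (sigmaAction fun _ => inferInstance) e := by
  let _ := a
  obtain ⟨n, ⟨σ⟩⟩ := Finite.exists_equiv_fin (MulAction.orbitRel.Quotient H X)
  let x (i : Fin n) : X := (σ.symm i).out
  have hx (i : Fin n) : (⟦x i⟧ : MulAction.orbitRel.Quotient H X) = σ.symm i :=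
    Quotient.out_eq _
  let f (p : Σ i : Fin n, H ⧸ (stabG H a (x i)).subgroupOf H) : X :=
    orbitMap H a (x p.1) p.2
  have hf : f.Bijective := by
    constructor
    · rintro ⟨i, q⟩ ⟨j, q'⟩ hqq'
      obtain ⟨h₁, rfl⟩ := QuotientGroup.mk_surjective q
      obtain ⟨h₂, rfl⟩ := QuotientGroup.mk_surjective q'
      change actSMul a h₁ (x i) = actSMul a h₂ (x j) at hqq'
      obtain rfl : i = j := by
        refine σ.symm.injective
          ((hx i).symm.trans (Eq.trans (Quotient.sound ⟨h₁⁻¹ * h₂, ?_⟩) (hx j)))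
        change actSMul a (h₁⁻¹ * h₂) (x j) = x i
        rw [actSMul_mul, ← hqq', actSMul_inv_actSMul]
      exact congrArg _ (orbitMap_injective H a (x i) hqq')
    · intro y
      obtain ⟨h, hh⟩ := Quotient.exact ((hx (σ ⟦y⟧)).trans (σ.symm_apply_apply _))
      refine ⟨⟨σ ⟦y⟧, ↑h⁻¹⟩, ?_⟩
      change actSMul a h⁻¹ (x (σ ⟦y⟧)) = y
      rw [← hh]
      exact actSMul_inv_actSMul a h y
  exact ⟨n, x, (Equiv.ofBijective f hf).symm,
    IsEquivariant.equiv_symm fun h p => isEquivariant_orbitMap H a (x p.1) h p.2⟩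

end OrbitMap

namespace IndexingSystem

variable {G : Type} [Group G] [Finite G] (I : IndexingSystem G)

lemma grel_stabG_of_mem {H : Subgroup G} {X : Type} {fX : Finite X} {aX : MulAction H X}
    (hX : I.mem H X fX aX) (x : X) : I.grel (stabG H aX x) H :=
  ⟨stabG_le, I.mem_sub H _ X inferInstance fX inferInstance aX (orbitMap H aX x)
    (orbitMap_injective H aX x) (isEquivariant_orbitMap H aX x) hX⟩

lemma grel_refl (H : Subgroup G) : I.grel H H := by
  simpa only [stabG_trivial] using I.grel_stabG_of_mem (I.mem_trivial H Unit inferInstance) ()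

lemma grel_trans {J K H : Subgroup G} (hJK : I.grel J K) (hKH : I.grel K H) : I.grel J H := by
  have := I.grel_stabG_of_mem (I.mem_selfind K H hKH.1 _ inferInstance inferInstance hJK.2 hKH.2)
    (Quotient.mk _ (1, ((1 : K) : K ⧸ J.subgroupOf K)))
  rwa [stabG_indAction_mk_one, stabG_quotient_one hJK.1] at this

lemma grel_conj {K H : Subgroup G} (g : G) (h : I.grel K H) :
    I.grel (conjS g K) (conjS g H) := by
  have := I.grel_stabG_of_mem (I.mem_conj H g _ inferInstance inferInstance h.2)
    ((1 : H) : H ⧸ K.subgroupOf H)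
  rwa [stabG_conj, stabG_quotient_one h.1] at this

lemma grel_res {K H : Subgroup G} (h : I.grel K H) {L : Subgroup G} (hLH : L ≤ H) :
    I.grel (K ⊓ L) L := by
  have := I.grel_stabG_of_mem (I.mem_res L H hLH _ inferInstance inferInstance h.2)
    ((1 : H) : H ⧸ K.subgroupOf H)
  rwa [stabG_res, stabG_quotient_one h.1] at this

def toTransferSystem : TransferSystem G where
  rel := I.grel
  le_of_rel _ _ h := h.1
  refl := I.grel_refl
  antisymm _ _ h₁ h₂ := le_antisymm h₁.1 h₂.1
  trans _ _ _ := I.grel_trans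
  conj _ _ g := I.grel_conj g
  res _ _ _ h := I.grel_res h

end IndexingSystem

namespace TransferSystem

variable {G : Type} [Group G] (T : TransferSystem G)

lemma rel_stabG_actSMul {H : Subgroup G} {X : Type} {a : MulAction H X} {x : X}
    (hx : T.rel (stabG H a x) H) (h : H) : T.rel (stabG H a (actSMul a h x)) H := by
  rw [stabG_actSMul]
  simpa only [conjS, Subgroup.conj_smul_eq_self_of_mem h.2] using T.conj _ _ h hx

lemma rel_stabG_quotient {K H : Subgroup G} (hKH : T.rel K H) (q : H ⧸ K.subgroupOf H) :
    T.rel (stabG H inferInstance q) H := by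
  obtain ⟨h, rfl⟩ := QuotientGroup.mk_surjective q
  rw [quotient_mk_eq_actSMul_mk_one]
  refine T.rel_stabG_actSMul ?_ h
  rwa [stabG_quotient_one (T.le_of_rel _ _ hKH)]

end TransferSystem

section OrbitCoprod

variable {G : Type} [Group G] [Finite G] (T : TransferSystem G) {H : Subgroup G} {X : Type}

lemma OrbitCoprod.rel_stabG {aX : MulAction H X} (hX : OrbitCoprod T H X aX) (x : X) :
    T.rel (stabG H aX x) H := by
  obtain ⟨n, K, hK, e, he⟩ := hX
  rw [stabG_eq_of_injective e.injective he x]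
  generalize e x = p
  obtain ⟨i, q⟩ := p
  rw [stabG_sigma_mk]
  exact T.rel_stabG_quotient (hK i) q

lemma orbitCoprod_iff_forall_rel_stabG [Finite X] (aX : MulAction H X) :
    OrbitCoprod T H X aX ↔ ∀ x, T.rel (stabG H aX x) H := by
  refine ⟨OrbitCoprod.rel_stabG T, fun hX => ?_⟩
  obtain ⟨n, x, e, he⟩ := exists_equiv_sigma_quotient_stabG H aX
  exact ⟨n, fun i => stabG H aX (x i), fun i => hX (x i), e, he⟩

lemma orbitCoprod_quotient_iff {K : Subgroup G} (hKH : K ≤ H) :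
    OrbitCoprod T H (H ⧸ K.subgroupOf H) inferInstance ↔ T.rel K H := by
  refine ⟨fun h => ?_, fun h => (orbitCoprod_iff_forall_rel_stabG T _).2 (T.rel_stabG_quotient h)⟩
  simpa only [stabG_quotient_one hKH] using h.rel_stabG T ((1 : H) : H ⧸ K.subgroupOf H)

lemma OrbitCoprod.mono {T₁ T₂ : TransferSystem G} (hT : T₁ ≤ T₂) {aX : MulAction H X} :
    OrbitCoprod T₁ H X aX → OrbitCoprod T₂ H X aX
  | ⟨n, K, hK, e⟩ => ⟨n, K, fun i => hT _ _ (hK i), e⟩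

end OrbitCoprod

def TransferSystem.toIndexingSystem {G : Type} [Group G] [Finite G] (T : TransferSystem G) :
    IndexingSystem G where
  mem H X _ aX := OrbitCoprod T H X aX
  mem_trivial H X _ := (orbitCoprod_iff_forall_rel_stabG T _).2 fun x => by
    rw [stabG_trivial]
    exact T.refl H
  mem_iso H X Y _ _ aX aY e he hX := (orbitCoprod_iff_forall_rel_stabG T _).2 fun y => by
    rw [← e.apply_symm_apply y, ← stabG_eq_of_injective e.injective he]
    exact hX.rel_stabG T _
  mem_res K H hKH X _ aX hX := (orbitCoprod_iff_forall_rel_stabG T _).2 fun x => by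
    rw [stabG_res]
    exact T.res _ H K (hX.rel_stabG T x) hKH
  mem_conj H g X _ aX hX := (orbitCoprod_iff_forall_rel_stabG T _).2 fun x => by
    rw [stabG_conj]
    exact T.conj _ _ g (hX.rel_stabG T x)
  mem_sub H X Y _ _ aX aY f hf he hY := (orbitCoprod_iff_forall_rel_stabG T _).2 fun x => by
    rw [stabG_eq_of_injective hf he]
    exact hY.rel_stabG T (f x)
  mem_sum H X Y _ _ aX aY hX hY := (orbitCoprod_iff_forall_rel_stabG T _).2 fun
    | .inl x => by
      rw [stabG_sum_inl]
      exact hX.rel_stabG T x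
    | .inr y => by
      rw [stabG_sum_inr]
      exact hY.rel_stabG T y
  mem_selfind K H hKH X _ aX hX hHK := (orbitCoprod_iff_forall_rel_stabG T _).2 fun t =>
    t.inductionOn fun ⟨h, x⟩ => by
      rw [indType_mk_eq_actSMul_mk_one]
      refine T.rel_stabG_actSMul ?_ h
      rw [stabG_indAction_mk_one]
      exact T.trans _ _ _ (hX.rel_stabG T x) ((orbitCoprod_quotient_iff T hKH).1 hHK)

def sigmaFinSuccEquiv {n : ℕ} (f : Fin (n + 1) → Type) :
    (f 0 ⊕ Σ i : Fin n, f i.succ) ≃ Σ i : Fin (n + 1), f i where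
  toFun
    | .inl y => ⟨0, y⟩
    | .inr p => ⟨p.1.succ, p.2⟩
  invFun p := Fin.cases (motive := fun i => f i → (f 0 ⊕ Σ i : Fin n, f i.succ))
    Sum.inl (fun i x => Sum.inr ⟨i, x⟩) p.1 p.2
  left_inv := by rintro (x | ⟨i, x⟩) <;> simp
  right_inv := by
    rintro ⟨i, x⟩
    induction i using Fin.cases <;> simp

namespace IndexingSystem

variable {G : Type} [Group G] [Finite G] (I : IndexingSystem G)

lemma mem_sigma (H : Subgroup G) {n : ℕ} {f : Fin n → Type} [∀ i, Finite (f i)]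
    (a : ∀ i, MulAction H (f i)) (ha : ∀ i, I.mem H (f i) inferInstance (a i)) :
    I.mem H (Σ i, f i) inferInstance (sigmaAction a) := by
  induction n with
  | zero =>
    exact I.mem_iso H _ _ inferInstance inferInstance (trivialSMul H _) (sigmaAction a)
      (Equiv.refl _) (fun _ p => p.1.elim0) (I.mem_trivial H _ inferInstance)
  | succ n ih =>
    exact I.mem_iso H _ _ inferInstance inferInstance _ (sigmaAction a) (sigmaFinSuccEquiv f)
      (by rintro h (x | ⟨i, x⟩) <;> rfl)
      (I.mem_sum H _ _ inferInstance inferInstance _ _ (ha 0)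
        (ih (fun i => a i.succ) (fun i => ha i.succ)))

lemma mem_iff_orbitCoprod (H : Subgroup G) (X : Type) (fX : Finite X) (aX : MulAction H X) :
    I.mem H X fX aX ↔ OrbitCoprod I.toTransferSystem H X aX := by
  refine ⟨fun hX => (orbitCoprod_iff_forall_rel_stabG _ aX).2 (I.grel_stabG_of_mem hX), ?_⟩
  rintro ⟨n, K, hK, e, he⟩
  exact I.mem_iso H _ X inferInstance fX _ aX e.symm he.equiv_symm
    (I.mem_sigma H _ fun i => (hK i).2)

lemma monotone_toTransferSystem :
    Monotone (toTransferSystem : IndexingSystem G → TransferSystem G) :=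
  fun _ _ hIJ _ _ h => ⟨h.1, hIJ _ _ _ _ h.2⟩

end IndexingSystem

namespace TransferSystem

variable {G : Type} [Group G] [Finite G] (T : TransferSystem G)

lemma toIndexingSystem_grel (K H : Subgroup G) :
    T.toIndexingSystem.grel K H ↔ T.rel K H :=
  ⟨fun ⟨hKH, h⟩ => (orbitCoprod_quotient_iff T hKH).1 h,
    fun h => ⟨T.le_of_rel _ _ h, (orbitCoprod_quotient_iff T (T.le_of_rel _ _ h)).2 h⟩⟩

lemma monotone_toIndexingSystem :
    Monotone (toIndexingSystem : TransferSystem G → IndexingSystem G) :=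
  fun _ _ hT _ _ _ _ => OrbitCoprod.mono hT

end TransferSystem

def IndexingSystem.equivTransferSystem (G : Type) [Group G] [Finite G] :
    IndexingSystem G ≃ TransferSystem G where
  toFun := IndexingSystem.toTransferSystem
  invFun := TransferSystem.toIndexingSystem
  left_inv I := le_antisymm (fun H X fX aX => (I.mem_iff_orbitCoprod H X fX aX).2)
    (fun H X fX aX => (I.mem_iff_orbitCoprod H X fX aX).1)
  right_inv T := le_antisymm (fun K H => (T.toIndexingSystem_grel K H).1)
    (fun K H => (T.toIndexingSystem_grel K H).2)

/-- The maps `I ↦ →_I` (taking an indexing system to its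
graph) and `→ ↦ I_→` (taking a transfer system to the coproducts-of-orbits
indexing system) are inverse order-isomorphisms between the poset of
`G`-indexing systems and the poset of `G`-transfer systems. -/
theorem stmt4 {G : Type} [Group G] [Finite G] :
    ∃ F : IndexingSystem G ≃o TransferSystem G,
      (∀ (I : IndexingSystem G) (K H : Subgroup G),
        (F I).rel K H ↔ I.grel K H) ∧
      (∀ (T : TransferSystem G) (H : Subgroup G) (X : Type) (fX : Finite X)
        (aX : MulAction H X),
        (F.symm T).mem H X fX aX ↔ OrbitCoprod T H X aX) :=
  ⟨(IndexingSystem.equivTransferSystem G).toOrderIso IndexingSystem.monotone_toTransferSystem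
      TransferSystem.monotone_toIndexingSystem,
    fun _ _ _ => Iff.rfl, fun _ _ _ _ _ => Iff.rfl⟩
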